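/- Let A ∈ ℝ^{m×n}, b ∈ ℝ^m, μ > 0, β ∈ [0,1), and set σ = μ(1−β) and L = ‖AᵀA‖ + σ. For any step size α with 0 < α < 2/L, the ISTA map f(x) = S_{αμβ}(x − α(Aᵀ(Ax − b) + σx)) is a contraction on Euclidean ℝⁿ with Lipschitz constant max(|1 − ασ|, |1 − αL|) < 1; consequently f has a unique fixed point x⋆, and for any starting point x₀ the fixed-point iterates x_{t+1} = f(x_t) converge to x⋆. -/

import Mathlib

open Matrix

/-- Interpret a plain vector in `Fin k → ℝ` as a point of Euclidean space. -/
noncomputable def toEuc (k : ℕ) (v : Fin k → ℝ) : EuclideanSpace ℝ (Fin k) :=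
  (WithLp.equiv 2 (Fin k → ℝ)).symm v

/-- Coordinatewise shrinkage (soft-thresholding) operator `S_κ` on `ℝⁿ`:
`S_κ(v)_i = sign(v_i) * max (|v_i| - κ) 0`. -/
noncomputable def shrink (n : ℕ) (κ : ℝ) (v : EuclideanSpace ℝ (Fin n)) :
    EuclideanSpace ℝ (Fin n) :=
  WithLp.toLp 2 (fun i => Real.sign (v i) * max (|v i| - κ) 0)

/-- The gradient map `∇q(x) = Aᵀ(Ax − b) + σx` of the smooth part of the elastic net
objective. -/
noncomputable def quadGrad (m n : ℕ) (A : Matrix (Fin m) (Fin n) ℝ)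
    (b : EuclideanSpace ℝ (Fin m)) (σ : ℝ) (x : EuclideanSpace ℝ (Fin n)) :
    EuclideanSpace ℝ (Fin n) :=
  toEuc n (Aᵀ.mulVec (toEuc m (A.mulVec x) - b)) + σ • x

/-- The ISTA fixed-point map `f(x) = S_{αμβ}(x − α(Aᵀ(Ax − b) + μ(1−β)x))` for elastic
net regression. -/
noncomputable def istaMap (m n : ℕ) (A : Matrix (Fin m) (Fin n) ℝ)
    (b : EuclideanSpace ℝ (Fin m)) (μ β α : ℝ) (x : EuclideanSpace ℝ (Fin n)) :
    EuclideanSpace ℝ (Fin n) :=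
  shrink n (α * μ * β) (x - α • quadGrad m n A b (μ * (1 - β)) x)

/-- The operator norm of `AᵀA` as a linear map on Euclidean space. -/
noncomputable def l2OpNormAtA (m n : ℕ) (A : Matrix (Fin m) (Fin n) ℝ) : ℝ :=
  ‖(Matrix.toEuclideanLin (Aᵀ * A)).toContinuousLinearMap‖

/-!
ISTA is the shrinkage `S_{αμβ}` composed with the forward step `x ↦ x − α(Aᵀ(Ax − b) + σx)`.
Shrinkage is coordinatewise `id − clamp` with a monotone 1-Lipschitz clamp, hence 1-Lipschitz.
The forward step is affine with linear part `(1 − ασ) − αAᵀA`, and since `0 ≤ AᵀA ≤ ‖A‖²` this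
part has norm at most `max |1 − ασ| |1 − αL|`, which is `< 1` for `0 < α < 2/L`. Banach's fixed
point theorem finishes.
-/

open scoped InnerProductSpace InnerProduct

noncomputable def softThreshold (κ x : ℝ) : ℝ :=
  Real.sign x * max (|x| - κ) 0

lemma softThreshold_eq_sub_clamp {κ : ℝ} (hκ : 0 ≤ κ) (x : ℝ) :
    softThreshold κ x = x - max (-κ) (min x κ) := by
  unfold softThreshold
  rcases lt_trichotomy x 0 with hx | rfl | hx
  · rw [Real.sign_of_neg hx, abs_of_neg hx]
    simp only [max_def, min_def]; split_ifs <;> linarith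
  · simp [hκ]
  · rw [Real.sign_of_pos hx, abs_of_pos hx]
    simp only [max_def, min_def]; split_ifs <;> linarith

lemma abs_softThreshold_sub_le {κ : ℝ} (hκ : 0 ≤ κ) (a c : ℝ) :
    |softThreshold κ a - softThreshold κ c| ≤ |a - c| := by
  wlog hca : c ≤ a generalizing a c
  · rw [abs_sub_comm, abs_sub_comm a]
    exact this c a (le_of_not_ge hca)
  have hmono : max (-κ) (min c κ) ≤ max (-κ) (min a κ) :=
    max_le_max le_rfl (min_le_min_right κ hca)
  have hlip : max (-κ) (min a κ) - max (-κ) (min c κ) ≤ a - c := by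
    simp only [max_def, min_def]; split_ifs <;> linarith
  rw [softThreshold_eq_sub_clamp hκ, softThreshold_eq_sub_clamp hκ,
    abs_of_nonneg (sub_nonneg.2 hca), abs_le]
  constructor <;> linarith

lemma lipschitzWith_shrink (n : ℕ) {κ : ℝ} (hκ : 0 ≤ κ) : LipschitzWith 1 (shrink n κ) := by
  refine LipschitzWith.of_dist_le_mul fun u v => ?_
  rw [NNReal.coe_one, one_mul, EuclideanSpace.dist_eq, EuclideanSpace.dist_eq]
  gcongr with i
  exact abs_softThreshold_sub_le hκ (u i) (v i)

section ForwardStep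

variable {E F : Type*} [NormedAddCommGroup E] [InnerProductSpace ℝ E] [CompleteSpace E]
  [NormedAddCommGroup F] [InnerProductSpace ℝ F] [CompleteSpace F]

/-- With `q = ⟪T†T z, z⟫ ∈ [0, ‖T‖²‖z‖²]` and `‖T†T z‖² ≤ ‖T‖² q`, the square of the left side is
bounded by an affine function of `q`, hence by its value at one of the two endpoints. -/
lemma norm_smul_sub_smul_adjoint_apply_le (T : E →L[ℝ] F) (s α : ℝ) (z : E) :
    ‖s • z - α • (T† ∘L T) z‖ ≤ max |s| |s - α * ‖T‖ ^ 2| * ‖z‖ := by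
  set c := max |s| |s - α * ‖T‖ ^ 2|
  set K := ‖T‖ ^ 2
  have hq : ⟪z, (T† ∘L T) z⟫_ℝ = ‖T z‖ ^ 2 := by
    rw [ContinuousLinearMap.comp_apply, ContinuousLinearMap.adjoint_inner_right,
      real_inner_self_eq_norm_sq]
  have hTz : ‖T z‖ ^ 2 ≤ K * ‖z‖ ^ 2 := by
    rw [← mul_pow]; gcongr; exact T.le_opNorm z
  have hTTz : ‖(T† ∘L T) z‖ ^ 2 ≤ K * ‖T z‖ ^ 2 := by
    rw [← mul_pow, ← ContinuousLinearMap.adjoint.norm_map T, ContinuousLinearMap.comp_apply]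
    gcongr
    exact (T†).le_opNorm (T z)
  have hexpand : ‖s • z - α • (T† ∘L T) z‖ ^ 2
      = s ^ 2 * ‖z‖ ^ 2 - 2 * s * α * ‖T z‖ ^ 2 + α ^ 2 * ‖(T† ∘L T) z‖ ^ 2 := by
    rw [norm_sub_sq_real, real_inner_smul_left, real_inner_smul_right, hq, norm_smul, norm_smul,
      Real.norm_eq_abs, Real.norm_eq_abs, mul_pow, mul_pow, sq_abs, sq_abs]
    ring
  have hc : |c| = c := abs_of_nonneg ((abs_nonneg s).trans (le_max_left _ _))
  have hs : s ^ 2 ≤ c ^ 2 := sq_le_sq.2 (by rw [hc]; exact le_max_left _ _)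
  have hsK : (s - α * K) ^ 2 ≤ c ^ 2 := sq_le_sq.2 (by rw [hc]; exact le_max_right _ _)
  have hsq : ‖s • z - α • (T† ∘L T) z‖ ^ 2 ≤ (c * ‖z‖) ^ 2 := by
    rw [hexpand, mul_pow]
    rcases le_total 0 (α ^ 2 * K - 2 * s * α) with hd | hd
    · nlinarith
    · nlinarith
  exact (pow_le_pow_iff_left₀ (norm_nonneg _) (by positivity) two_ne_zero).1 hsq

noncomputable def forwardStep (T : E →L[ℝ] F) (b : F) (σ α : ℝ) (x : E) : E :=
  x - α • ((T†) (T x - b) + σ • x)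

lemma lipschitzWith_forwardStep (T : E →L[ℝ] F) (b : F) (σ α : ℝ) :
    LipschitzWith (max |1 - α * σ| |1 - α * (‖T‖ ^ 2 + σ)|).toNNReal (forwardStep T b σ α) := by
  refine LipschitzWith.of_dist_le_mul fun x y => ?_
  have hc : 0 ≤ max |1 - α * σ| |1 - α * (‖T‖ ^ 2 + σ)| := (abs_nonneg _).trans (le_max_left _ _)
  have hdiff : forwardStep T b σ α x - forwardStep T b σ α y
      = (1 - α * σ) • (x - y) - α • (T† ∘L T) (x - y) := by
    simp only [forwardStep, ContinuousLinearMap.comp_apply, map_sub]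
    module
  rw [Real.coe_toNNReal _ hc, dist_eq_norm, dist_eq_norm, hdiff,
    show 1 - α * (‖T‖ ^ 2 + σ) = 1 - α * σ - α * ‖T‖ ^ 2 by ring]
  exact norm_smul_sub_smul_adjoint_apply_le T _ α _

end ForwardStep

lemma max_abs_one_sub_lt_one {a b : ℝ} (ha : 0 < a) (hab : a ≤ b) (hb : b < 2) :
    max |1 - a| |1 - b| < 1 :=
  max_lt (abs_lt.2 ⟨by linarith, by linarith⟩) (abs_lt.2 ⟨by linarith, by linarith⟩)

section Matrix

variable {m n : ℕ} (A : Matrix (Fin m) (Fin n) ℝ)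

noncomputable def euclideanCLM : EuclideanSpace ℝ (Fin n) →L[ℝ] EuclideanSpace ℝ (Fin m) :=
  (toEuclideanLin A).toContinuousLinearMap

lemma adjoint_euclideanCLM : (euclideanCLM A)† = euclideanCLM Aᵀ := by
  rw [euclideanCLM, euclideanCLM, ← LinearMap.adjoint_toContinuousLinearMap,
    ← toEuclideanLin_conjTranspose_eq_adjoint, conjTranspose_eq_transpose_of_trivial]

lemma l2OpNormAtA_eq_sq : l2OpNormAtA m n A = ‖euclideanCLM A‖ ^ 2 := by
  have hcomp : (toEuclideanLin (Aᵀ * A)).toContinuousLinearMap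
      = (euclideanCLM A)† ∘L euclideanCLM A := by
    rw [adjoint_euclideanCLM]
    ext1 x
    simp [euclideanCLM]
  rw [l2OpNormAtA, hcomp, ContinuousLinearMap.norm_adjoint_comp_self, sq]

lemma istaMap_eq_shrink_comp_forwardStep (b : EuclideanSpace ℝ (Fin m)) (μ β α : ℝ) :
    istaMap m n A b μ β α
      = shrink n (α * μ * β) ∘ forwardStep (euclideanCLM A) b (μ * (1 - β)) α := by
  ext1 x
  rw [istaMap, Function.comp_apply, forwardStep, adjoint_euclideanCLM]
  rfl

end Matrix

/-- For `μ > 0`, `β ∈ [0,1)`, `σ = μ(1−β)`, `L = ‖AᵀA‖ + σ`, and step size `0 < α < 2/L`,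
the ISTA map `f(x) = S_{αμβ}(x − α(Aᵀ(Ax − b) + σx))` is a contraction on Euclidean `ℝⁿ`
with Lipschitz constant `max (|1 − ασ|) (|1 − αL|) < 1`; consequently `f` has a unique
fixed point `x⋆` and the fixed-point iterates `x_{t+1} = f(x_t)` converge to `x⋆` from
any starting point. -/
theorem ista_contraction_and_convergence (m n : ℕ) (A : Matrix (Fin m) (Fin n) ℝ)
    (b : EuclideanSpace ℝ (Fin m)) (μ β α : ℝ) (hμ : 0 < μ) (hβ0 : 0 ≤ β) (hβ1 : β < 1)
    (hα : 0 < α) (hα2 : α < 2 / (l2OpNormAtA m n A + μ * (1 - β))) :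
    LipschitzWith
      (max |1 - α * (μ * (1 - β))| |1 - α * (l2OpNormAtA m n A + μ * (1 - β))|).toNNReal
      (istaMap m n A b μ β α) ∧
    max |1 - α * (μ * (1 - β))| |1 - α * (l2OpNormAtA m n A + μ * (1 - β))| < 1 ∧
    ∃ xstar : EuclideanSpace ℝ (Fin n),
      istaMap m n A b μ β α xstar = xstar ∧
      (∀ y : EuclideanSpace ℝ (Fin n), istaMap m n A b μ β α y = y → y = xstar) ∧
      (∀ x0 : EuclideanSpace ℝ (Fin n),
        Filter.Tendsto (fun t : ℕ => (istaMap m n A b μ β α)^[t] x0)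
          Filter.atTop (nhds xstar)) := by
  have hσ : 0 < μ * (1 - β) := mul_pos hμ (by linarith)
  have hK : 0 ≤ l2OpNormAtA m n A := by rw [l2OpNormAtA_eq_sq]; positivity
  have hL : α * (l2OpNormAtA m n A + μ * (1 - β)) < 2 := (lt_div_iff₀ (by linarith)).1 hα2
  have hc := max_abs_one_sub_lt_one (mul_pos hα hσ) (by nlinarith) hL
  have hlip : LipschitzWith
      (max |1 - α * (μ * (1 - β))| |1 - α * (l2OpNormAtA m n A + μ * (1 - β))|).toNNReal
      (istaMap m n A b μ β α) := by
    rw [istaMap_eq_shrink_comp_forwardStep, l2OpNormAtA_eq_sq]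
    simpa using (lipschitzWith_shrink n (by positivity)).comp
      (lipschitzWith_forwardStep (euclideanCLM A) b (μ * (1 - β)) α)
  have hf : ContractingWith _ (istaMap m n A b μ β α) := ⟨Real.toNNReal_lt_one.2 hc, hlip⟩
  exact ⟨hlip, hc, hf.fixedPoint _, hf.fixedPoint_isFixedPt,
    fun _ hy => hf.fixedPoint_unique hy, hf.tendsto_iterate_fixedPoint⟩
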